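/- arXiv:2105.00517 — 4 statements merged into one kernel-verified Lean document; each statement's English description precedes it below -/
import Mathlib

section
/- For any probability mass functions P_a, P_b, P_c on a finite set X of real numbers and any threshold d ≥ 0, the thresholded optimal transport costs satisfy the inequality OT_{2d}(P_a, P_b) − OT_d(P_c, P_b) ≤ OT_d(P_a, P_c). -/
open Finset

/-- A probability mass function on a finite set `X` of real numbers. -/
def IsPMF (X : Finset ℝ) (μ : ℝ → ℝ) : Prop :=
  (∀ x ∈ X, 0 ≤ μ x) ∧ ∑ x ∈ X, μ x = 1

/-- A coupling of `μ` and `ν` on `X`: a nonnegative joint mass function on `X × X`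
whose first marginal is `μ` and second marginal is `ν`. -/
def IsCoupling (X : Finset ℝ) (μ ν : ℝ → ℝ) (γ : ℝ → ℝ → ℝ) : Prop :=
  (∀ x ∈ X, ∀ y ∈ X, 0 ≤ γ x y) ∧
  (∀ x ∈ X, ∑ y ∈ X, γ x y = μ x) ∧
  (∀ y ∈ X, ∑ x ∈ X, γ x y = ν y)

/-- The mass that a plan `γ` moves a distance of more than `d`. -/
noncomputable def transportCost (X : Finset ℝ) (d : ℝ) (γ : ℝ → ℝ → ℝ) : ℝ :=
  ∑ x ∈ X, ∑ y ∈ X, if d < |x - y| then γ x y else 0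

/-- The thresholded optimal transport cost `OT_d(μ, ν)`:
the infimum over couplings of `μ` and `ν` of the mass moved more than `d`. -/
noncomputable def OT (X : Finset ℝ) (d : ℝ) (μ ν : ℝ → ℝ) : ℝ :=
  sInf (transportCost X d '' {γ | IsCoupling X μ ν γ})

/-!
Glue any coupling `γ₁` of `(Pa, Pc)` and any coupling `γ₂` of `(Pc, Pb)` along
their common marginal `Pc`: the three-point plan `γ₁ x z * γ₂ z y / Pc z` has `γ₁` and `γ₂` as its
two-point marginals, so summing out `z` gives a coupling of `(Pa, Pb)`. Whenever `|x - y| > 2d`,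
the triangle inequality forces `|x - z| > d` or `|z - y| > d`, so the glued plan moves no more
mass further than `2d` than `γ₁` and `γ₂` together move further than `d`; now take infima.
-/

section Gluing

variable {X : Finset ℝ} {μ ν ρ : ℝ → ℝ} {γ γ₁ γ₂ : ℝ → ℝ → ℝ} {x y z d₁ d₂ : ℝ}

theorem isCoupling_mul (hμ : IsPMF X μ) (hν : IsPMF X ν) :
    IsCoupling X μ ν (fun x y => μ x * ν y) := by
  refine ⟨fun x hx y hy => mul_nonneg (hμ.1 x hx) (hν.1 y hy), fun x _ => ?_, fun y _ => ?_⟩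
  · rw [← mul_sum, hν.2, mul_one]
  · rw [← sum_mul, hμ.2, one_mul]

theorem IsCoupling.right_nonneg (h : IsCoupling X μ ν γ) (hy : y ∈ X) : 0 ≤ ν y :=
  h.2.2 y hy ▸ sum_nonneg fun x hx => h.1 x hx y hy

theorem IsCoupling.eq_zero_of_left_eq_zero (h : IsCoupling X μ ν γ) (hx : x ∈ X) (hy : y ∈ X)
    (hμ : μ x = 0) : γ x y = 0 :=
  (sum_eq_zero_iff_of_nonneg fun y hy => h.1 x hx y hy).1 (h.2.1 x hx ▸ hμ) y hy

theorem IsCoupling.eq_zero_of_right_eq_zero (h : IsCoupling X μ ν γ) (hx : x ∈ X) (hy : y ∈ X)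
    (hν : ν y = 0) : γ x y = 0 :=
  (sum_eq_zero_iff_of_nonneg fun x hx => h.1 x hx y hy).1 (h.2.2 y hy ▸ hν) x hx

/-- Where `ν z = 0` this is `0` by `a / 0 = 0`, which is right since then `γ₁ x z = γ₂ z y = 0`
for couplings through `ν`. -/
noncomputable def gluePlan (ν : ℝ → ℝ) (γ₁ γ₂ : ℝ → ℝ → ℝ) (x z y : ℝ) : ℝ :=
  γ₁ x z * γ₂ z y / ν z

noncomputable def glue (X : Finset ℝ) (ν : ℝ → ℝ) (γ₁ γ₂ : ℝ → ℝ → ℝ) (x y : ℝ) : ℝ :=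
  ∑ z ∈ X, gluePlan ν γ₁ γ₂ x z y

theorem gluePlan_nonneg (h₁ : IsCoupling X μ ν γ₁) (h₂ : IsCoupling X ν ρ γ₂)
    (hx : x ∈ X) (hz : z ∈ X) (hy : y ∈ X) : 0 ≤ gluePlan ν γ₁ γ₂ x z y :=
  div_nonneg (mul_nonneg (h₁.1 x hx z hz) (h₂.1 z hz y hy)) (h₁.right_nonneg hz)

theorem sum_gluePlan_right (h₁ : IsCoupling X μ ν γ₁) (h₂ : IsCoupling X ν ρ γ₂)
    (hx : x ∈ X) (hz : z ∈ X) : ∑ y ∈ X, gluePlan ν γ₁ γ₂ x z y = γ₁ x z := by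
  simp_rw [gluePlan, mul_div_right_comm]
  rw [← mul_sum, h₂.2.1 z hz, div_mul_cancel_of_imp (h₁.eq_zero_of_right_eq_zero hx hz)]

theorem sum_gluePlan_left (h₁ : IsCoupling X μ ν γ₁) (h₂ : IsCoupling X ν ρ γ₂)
    (hz : z ∈ X) (hy : y ∈ X) : ∑ x ∈ X, gluePlan ν γ₁ γ₂ x z y = γ₂ z y := by
  simp_rw [gluePlan, mul_comm (γ₁ _ z), mul_div_right_comm]
  rw [← mul_sum, h₁.2.2 z hz, div_mul_cancel_of_imp (h₂.eq_zero_of_left_eq_zero hz hy)]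

theorem isCoupling_glue (h₁ : IsCoupling X μ ν γ₁) (h₂ : IsCoupling X ν ρ γ₂) :
    IsCoupling X μ ρ (glue X ν γ₁ γ₂) := by
  refine ⟨fun x hx y hy => sum_nonneg fun z hz => gluePlan_nonneg h₁ h₂ hx hz hy,
    fun x hx => ?_, fun y hy => ?_⟩
  · simp only [glue]
    rw [sum_comm, ← h₁.2.1 x hx]
    exact sum_congr rfl fun z hz => sum_gluePlan_right h₁ h₂ hx hz
  · simp only [glue]
    rw [sum_comm, ← h₂.2.2 y hy]
    exact sum_congr rfl fun z hz => sum_gluePlan_left h₁ h₂ hz hy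

theorem ite_lt_abs_sub_le_add {t : ℝ} (ht : 0 ≤ t) (x y z : ℝ) :
    (if d₁ + d₂ < |x - y| then t else 0) ≤
      (if d₁ < |x - z| then t else 0) + (if d₂ < |z - y| then t else 0) := by
  have := abs_sub_le x z y
  split_ifs <;> linarith

theorem transportCost_glue_le (h₁ : IsCoupling X μ ν γ₁) (h₂ : IsCoupling X ν ρ γ₂) :
    transportCost X (d₁ + d₂) (glue X ν γ₁ γ₂) ≤
      transportCost X d₁ γ₁ + transportCost X d₂ γ₂ := by
  calc transportCost X (d₁ + d₂) (glue X ν γ₁ γ₂)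
      = ∑ x ∈ X, ∑ y ∈ X, ∑ z ∈ X, if d₁ + d₂ < |x - y| then gluePlan ν γ₁ γ₂ x z y else 0 := by
        simp only [transportCost, glue, ite_sum_zero]
    _ ≤ ∑ x ∈ X, ∑ y ∈ X, ∑ z ∈ X,
          ((if d₁ < |x - z| then gluePlan ν γ₁ γ₂ x z y else 0) +
            (if d₂ < |z - y| then gluePlan ν γ₁ γ₂ x z y else 0)) := by
        gcongr with x hx y hy z hz
        exact ite_lt_abs_sub_le_add (gluePlan_nonneg h₁ h₂ hx hz hy) x y z
    _ = ∑ x ∈ X, ∑ z ∈ X, (if d₁ < |x - z| then γ₁ x z else 0) +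
          ∑ z ∈ X, ∑ y ∈ X, (if d₂ < |z - y| then γ₂ z y else 0) := by
        simp only [sum_add_distrib]
        congr 1
        · refine sum_congr rfl fun x hx => ?_
          rw [sum_comm]
          refine sum_congr rfl fun z hz => ?_
          rw [← ite_sum_zero, sum_gluePlan_right h₁ h₂ hx hz]
        · rw [sum_comm, sum_congr rfl fun y _ => sum_comm, sum_comm]
          refine sum_congr rfl fun z hz => sum_congr rfl fun y hy => ?_
          rw [← ite_sum_zero, sum_gluePlan_left h₁ h₂ hz hy]

end Gluing

section OT

variable {X : Finset ℝ} {μ ν ρ : ℝ → ℝ} {γ : ℝ → ℝ → ℝ} {d d₁ d₂ : ℝ}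

theorem transportCost_nonneg (hγ : ∀ x ∈ X, ∀ y ∈ X, 0 ≤ γ x y) : 0 ≤ transportCost X d γ :=
  sum_nonneg fun x hx => sum_nonneg fun y hy => by
    split_ifs
    exacts [hγ x hx y hy, le_rfl]

theorem bddBelow_transportCost_image :
    BddBelow (transportCost X d '' {γ | IsCoupling X μ ν γ}) :=
  ⟨0, by rintro _ ⟨γ, hγ, rfl⟩; exact transportCost_nonneg hγ.1⟩

theorem nonempty_transportCost_image (hμ : IsPMF X μ) (hν : IsPMF X ν) :
    (transportCost X d '' {γ | IsCoupling X μ ν γ}).Nonempty :=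
  ⟨_, _, isCoupling_mul hμ hν, rfl⟩

theorem OT_le_transportCost (hγ : IsCoupling X μ ν γ) : OT X d μ ν ≤ transportCost X d γ :=
  csInf_le bddBelow_transportCost_image ⟨γ, hγ, rfl⟩

theorem OT_add_le (hμ : IsPMF X μ) (hν : IsPMF X ν) (hρ : IsPMF X ρ) :
    OT X (d₁ + d₂) μ ρ ≤ OT X d₁ μ ν + OT X d₂ ν ρ := by
  unfold OT
  rw [← csInf_add (nonempty_transportCost_image hμ hν) bddBelow_transportCost_image
    (nonempty_transportCost_image hν hρ) bddBelow_transportCost_image]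
  refine le_csInf ((nonempty_transportCost_image hμ hν).add
    (nonempty_transportCost_image hν hρ)) ?_
  rintro _ ⟨_, ⟨γ₁, h₁, rfl⟩, _, ⟨γ₂, h₂, rfl⟩, rfl⟩
  exact (OT_le_transportCost (isCoupling_glue h₁ h₂)).trans (transportCost_glue_le h₁ h₂)

end OT

theorem ot_difference_triangle_inequality_general
    (X : Finset ℝ) (Pa Pb Pc : ℝ → ℝ)
    (hPa : IsPMF X Pa) (hPb : IsPMF X Pb) (hPc : IsPMF X Pc)
    (d : ℝ) :
    OT X (2 * d) Pa Pb - OT X d Pc Pb ≤ OT X d Pa Pc := by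
  rw [two_mul, sub_le_iff_le_add]
  exact OT_add_le hPa hPc hPb

/-- Theorem 1 of the paper: for pmfs `P_a, P_b, P_c` on a finite set
`X ⊆ ℝ` and any threshold `d ≥ 0`,
`OT_{2d}(P_a, P_b) − OT_d(P_c, P_b) ≤ OT_d(P_a, P_c)`. -/
theorem ot_difference_triangle_inequality
    (X : Finset ℝ) (Pa Pb Pc : ℝ → ℝ)
    (hPa : IsPMF X Pa) (hPb : IsPMF X Pb) (hPc : IsPMF X Pc)
    (d : ℝ) (hd : 0 ≤ d) :
    OT X (2 * d) Pa Pb - OT X d Pc Pb ≤ OT X d Pa Pc :=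
  ot_difference_triangle_inequality_general X Pa Pb Pc hPa hPb hPc d
end

section
/- In the market equilibrium model, if F is nondecreasing and the market clears at volume of trade s·q at some (p, t) with t ≥ 0 and s > 0, then s ≤ (N − q)/N. That is, the equilibrium share of the quota that can be traded on the black market never exceeds (N − q)/N. -/
/-- The market clears at volume of trade `s * q` at price `p` and per-side
transaction cost `t`: demand `(N - q) * (1 - F (p + t))` and supply
`q * F (p - t)` both equal `s * q`. -/
def Clears (N q : ℝ) (F : ℝ → ℝ) (s p t : ℝ) : Prop :=
  (N - q) * (1 - F (p + t)) = s * q ∧ q * F (p - t) = s * q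

/-!
Supply clearing forces `F (p - t) = s`. Since `p - t ≤ p + t` and `F` is nondecreasing,
`F (p + t) ≥ s`, so demand gives `s q = (N - q)(1 - F (p + t)) ≤ (N - q)(1 - s)`,
which rearranges to `s N ≤ N - q`.
-/

namespace Clears

variable {N q : ℝ} {F : ℝ → ℝ} {s p t : ℝ}

theorem apply_sub_eq (h : Clears N q F s p t) (hq : q ≠ 0) : F (p - t) = s :=
  mul_left_cancel₀ hq (h.2.trans (mul_comm s q))

theorem mul_le_mul_one_sub (h : Clears N q F s p t) (hq : q ≠ 0) (hqN : q ≤ N)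
    (hF : F (p - t) ≤ F (p + t)) : s * q ≤ (N - q) * (1 - s) := by
  rw [← h.1, ← h.apply_sub_eq hq]
  gcongr

end Clears

theorem equilibrium_share_upper_bound_general
    (N q : ℝ) (hq : 0 < q) (hqN : q < N)
    (F : ℝ → ℝ)
    (hFmono : Monotone F)
    (s p t : ℝ) (ht : 0 ≤ t)
    (h : Clears N q F s p t) :
    s ≤ (N - q) / N := by
  have hdemand := h.mul_le_mul_one_sub hq.ne' hqN.le (hFmono (by linarith))
  rw [le_div_iff₀ (hq.trans hqN)]
  linear_combination hdemand

/-- if `F` is nondecreasing and the market clears at volume `s * q`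
at some `(p, t)` with `t ≥ 0` and `s > 0`, then `s ≤ (N − q)/N`: the equilibrium
share of the quota traded on the black market never exceeds `(N − q)/N`. -/
theorem equilibrium_share_upper_bound
    (N q : ℝ) (hq : 0 < q) (hqN : q < N)
    (F : ℝ → ℝ) (hF01 : ∀ v, 0 ≤ F v ∧ F v ≤ 1)
    (hFmono : Monotone F)
    (s p t : ℝ) (ht : 0 ≤ t) (hs0 : 0 < s)
    (h : Clears N q F s p t) :
    s ≤ (N - q) / N :=
  equilibrium_share_upper_bound_general N q hq hqN F hFmono s p t ht h
end

section
/- In the market equilibrium model, the buyer's all-in price is strictly decreasing and the seller's net price is strictly increasing in the volume of trade: if F is nondecreasing, the market clears at volume s·q at (p, t) and at volume s′·q at (p′, t′), and 0 < s < s′, then p + t > p′ + t′ and p − t < p′ − t′. In particular, the buyer price p̃_buyer = p + t computed at a lower-bound share is an upper bound, and the seller price p̃_seller = p − t computed at a lower-bound share is a lower bound. -/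
namespace Clears

variable {N q : ℝ} {F : ℝ → ℝ} {s s' p t p' t' : ℝ}

theorem sub_lt_sub_of_lt (hq : 0 < q) (hF : Monotone F)
    (h : Clears N q F s p t) (h' : Clears N q F s' p' t') (hss' : s < s') :
    p - t < p' - t' :=
  (hF.const_mul hq.le).reflect_lt <| by
    simpa only [h.2, h'.2] using mul_lt_mul_of_pos_right hss' hq

theorem add_lt_add_of_lt (hq : 0 < q) (hqN : q < N) (hF : Monotone F)
    (h : Clears N q F s p t) (h' : Clears N q F s' p' t') (hss' : s < s') :
    p' + t' < p + t := by
  have hdemand : Antitone fun v => (N - q) * (1 - F v) := fun _ _ hab =>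
    mul_le_mul_of_nonneg_left (sub_le_sub_left (hF hab) 1) (sub_nonneg.2 hqN.le)
  exact hdemand.reflect_lt <| by
    simpa only [h.1, h'.1] using mul_lt_mul_of_pos_right hss' hq

end Clears

theorem buyer_price_decreasing_seller_price_increasing_general
    (N q : ℝ) (hq : 0 < q) (hqN : q < N)
    (F : ℝ → ℝ)
    (hFmono : Monotone F)
    (s s' p t p' t' : ℝ) (hss' : s < s')
    (h : Clears N q F s p t) (h' : Clears N q F s' p' t') :
    p + t > p' + t' ∧ p - t < p' - t' :=
  ⟨h.add_lt_add_of_lt hq hqN hFmono h' hss',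
    h.sub_lt_sub_of_lt hq hFmono h' hss'⟩

/-- the buyer's all-in price `p + t` is strictly decreasing and
the seller's net price `p − t` is strictly increasing in the volume of trade:
if `F` is nondecreasing, the market clears at volume `s * q` at `(p, t)` and at
volume `s' * q` at `(p', t')`, and `0 < s < s'`, then `p + t > p' + t'` and
`p − t < p' − t'`. -/
theorem buyer_price_decreasing_seller_price_increasing
    (N q : ℝ) (hq : 0 < q) (hqN : q < N)
    (F : ℝ → ℝ) (hF01 : ∀ v, 0 ≤ F v ∧ F v ≤ 1)
    (hFmono : Monotone F)
    (s s' p t p' t' : ℝ) (hs0 : 0 < s) (hss' : s < s')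
    (h : Clears N q F s p t) (h' : Clears N q F s' p' t') :
    p + t > p' + t' ∧ p - t < p' - t' :=
  buyer_price_decreasing_seller_price_increasing_general N q hq hqN F hFmono s s' p t p' t' hss' h
    h'
end

section
/- In the market equilibrium model with heterogeneous transaction costs, the buyer and seller prices are identified even though the decomposition into price and side-specific costs is not: suppose F is strictly increasing, and triples (p, t_b, t_s) and (p′, t_b′, t_s′) both satisfy (N − q)·(1 − F(p + t_b)) = s·q and q·F(p − t_s) = s·q (and likewise for the primed triple) for the same share s ∈ (0,1). Then p + t_b = p′ + t_b′ and p − t_s = p′ − t_s′. Moreover, writing p̃_buyer = p + t_b and p̃_seller = p − t_s, for every price p″ with p̃_seller ≤ p″ ≤ p̃_buyer, the triple (p″, p̃_buyer − p″, p″ − p̃_seller) also satisfies both market-clearing equations with nonnegative side-specific costs, so the individual components p, t_b, t_s are not identified. -/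
/-!
Market clearing only sees the buyer price `p + tb` and the seller price `p - ts`. Since demand
and supply are injective in these prices, the clearing volume pins both of them down, while any
split of the gap between them into a price and two nonnegative costs clears the market as well.
-/

/-- Market clearing with heterogeneous transaction costs: the buyer bears cost
`tb` and the seller bears cost `ts` per trade at transaction price `p`; demand
`(N − q) * (1 − F (p + tb))` and supply `q * F (p − ts)` both equal `s * q`. -/
def ClearsH (N q : ℝ) (F : ℝ → ℝ) (s p tb ts : ℝ) : Prop :=
  (N - q) * (1 - F (p + tb)) = s * q ∧ q * F (p - ts) = s * q

namespace ClearsH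

variable {N q : ℝ} {F : ℝ → ℝ} {s p tb ts p' tb' ts' : ℝ}

theorem of_buyer_seller_price_eq (h : ClearsH N q F s p tb ts)
    (hb : p' + tb' = p + tb) (hs : p' - ts' = p - ts) : ClearsH N q F s p' tb' ts' := by
  unfold ClearsH at *
  rwa [hb, hs]

theorem buyer_price_eq (hqN : q ≠ N) (hF : Function.Injective F)
    (h : ClearsH N q F s p tb ts) (h' : ClearsH N q F s p' tb' ts') : p + tb = p' + tb' := by
  have hdemand : (N - q) * (1 - F (p + tb)) = (N - q) * (1 - F (p' + tb')) := h.1.trans h'.1.symm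
  have hF_eq : 1 - F (p + tb) = 1 - F (p' + tb') :=
    mul_left_cancel₀ (sub_ne_zero.mpr hqN.symm) hdemand
  exact hF (sub_right_injective hF_eq)

theorem seller_price_eq (hq : q ≠ 0) (hF : Function.Injective F)
    (h : ClearsH N q F s p tb ts) (h' : ClearsH N q F s p' tb' ts') : p - ts = p' - ts' :=
  hF (mul_left_cancel₀ hq (h.2.trans h'.2.symm))

end ClearsH

theorem heterogeneous_costs_buyer_seller_prices_identified_general
    (N q : ℝ) (hq : 0 < q) (hqN : q < N)
    (F : ℝ → ℝ)
    (hFmono : StrictMono F)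
    (s : ℝ)
    (p tb ts p' tb' ts' : ℝ)
    (h : ClearsH N q F s p tb ts) (h' : ClearsH N q F s p' tb' ts') :
    p + tb = p' + tb' ∧ p - ts = p' - ts' ∧
    ∀ p'' : ℝ, p - ts ≤ p'' → p'' ≤ p + tb →
      0 ≤ (p + tb) - p'' ∧ 0 ≤ p'' - (p - ts) ∧
      ClearsH N q F s p'' ((p + tb) - p'') (p'' - (p - ts)) := by
  refine ⟨h.buyer_price_eq hqN.ne hFmono.injective h',
    h.seller_price_eq hq.ne' hFmono.injective h', fun p'' hseller hbuyer => ?_⟩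
  exact ⟨sub_nonneg.mpr hbuyer, sub_nonneg.mpr hseller,
    h.of_buyer_seller_price_eq (add_sub_cancel p'' _) (sub_sub_cancel p'' _)⟩

/-- with heterogeneous transaction costs, the buyer and seller
prices `p̃_buyer = p + t_b` and `p̃_seller = p − t_s` are identified even though
the decomposition into price and side-specific costs is not: any two clearing
triples agree on `p + t_b` and `p − t_s`, and for every price `p''` between
`p̃_seller` and `p̃_buyer`, the triple `(p'', p̃_buyer − p'', p'' − p̃_seller)`
also clears the market with nonnegative side-specific costs. -/
theorem heterogeneous_costs_buyer_seller_prices_identified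
    (N q : ℝ) (hq : 0 < q) (hqN : q < N)
    (F : ℝ → ℝ) (hF01 : ∀ v, 0 ≤ F v ∧ F v ≤ 1)
    (hFmono : StrictMono F)
    (s : ℝ) (hs0 : 0 < s) (hs1 : s < 1)
    (p tb ts p' tb' ts' : ℝ)
    (h : ClearsH N q F s p tb ts) (h' : ClearsH N q F s p' tb' ts') :
    p + tb = p' + tb' ∧ p - ts = p' - ts' ∧
    ∀ p'' : ℝ, p - ts ≤ p'' → p'' ≤ p + tb →
      0 ≤ (p + tb) - p'' ∧ 0 ≤ p'' - (p - ts) ∧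
      ClearsH N q F s p'' ((p + tb) - p'') (p'' - (p - ts)) :=
  heterogeneous_costs_buyer_seller_prices_identified_general N q hq hqN F hFmono s p tb ts p' tb'
    ts' h h'
end
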